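/- In a well-founded abstract argumentation framework, every complete extension is a stable extension, i.e., it attacks every argument that does not belong to it. -/
import Mathlib

/-- A set of arguments `S` attacks an argument `α` if some `β ∈ S` attacks `α`. -/
def attacks {A : Type*} (R : A → A → Prop) (S : Set A) (α : A) : Prop :=
  ∃ β ∈ S, R β α

/-- A set of arguments `S` is conflict-free if no argument in `S` is attacked by `S`. -/
def conflictFree {A : Type*} (R : A → A → Prop) (S : Set A) : Prop :=
  ∀ β ∈ S, ¬ attacks R S β

/-- An argument `α` is acceptable w.r.t. `S` if every attacker of `α` is attacked by `S`. -/
def acceptable {A : Type*} (R : A → A → Prop) (α : A) (S : Set A) : Prop :=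
  ∀ β, R β α → attacks R S β

/-- A set `S` is admissible if it is conflict-free and every argument in `S`
is acceptable with respect to `S`. -/
def admissible {A : Type*} (R : A → A → Prop) (S : Set A) : Prop :=
  conflictFree R S ∧ ∀ α ∈ S, acceptable R α S

/-- A set `S` is a complete extension if it is admissible and every argument
acceptable with respect to `S` belongs to `S`. -/
def completeExt {A : Type*} (R : A → A → Prop) (S : Set A) : Prop :=
  admissible R S ∧ ∀ α, acceptable R α S → α ∈ S

/-- An AF is well-founded if there is no infinite sequence `α₀, α₁, …`
with `(α_{i+1}, α_i) ∈ R` for all `i`. -/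
def wellFoundedAF {A : Type*} (R : A → A → Prop) : Prop :=
  ¬ ∃ f : ℕ → A, ∀ i : ℕ, R (f (i + 1)) (f i)

theorem wf_of_wfAF {A : Type*} (R : A → A → Prop) (hwf : wellFoundedAF R) :
    WellFounded R := by
  by_contra h
  have : ∃ a : A, ¬ Acc R a := by
    by_contra h'
    push_neg at h'
    exact h ⟨h'⟩
  obtain ⟨a, ha⟩ := this
  have step : ∀ x : A, ¬ Acc R x → ∃ y : A, R y x ∧ ¬ Acc R y := by
    intro x hx
    by_contra h'
    push_neg at h'
    exact hx (Acc.intro x fun y hy => h' y hy)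
  choose g hg1 hg2 using step
  let f : ℕ → {x : A // ¬ Acc R x} := fun n =>
    Nat.rec ⟨a, ha⟩ (fun _ p => ⟨g p.1 p.2, hg2 p.1 p.2⟩) n
  exact hwf ⟨fun n => (f n).1, fun i => hg1 (f i).1 (f i).2⟩

/-- In a well-founded AF, every complete extension is a stable extension,
i.e. it is conflict-free and attacks every argument not in it. -/
theorem wellFounded_complete_is_stable {A : Type*} (R : A → A → Prop)
    (hwf : wellFoundedAF R) (S : Set A) (hS : completeExt R S) :
    conflictFree R S ∧ ∀ α : A, α ∉ S → attacks R S α := by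
  have wf := wf_of_wfAF R hwf
  have key : ∀ α, acceptable R α S ∨ attacks R S α := by
    intro α
    induction α using wf.induction with
    | _ α ih =>
      by_cases h : ∀ β, R β α → attacks R S β
      · exact Or.inl h
      · push_neg at h
        obtain ⟨β, hβα, hβ⟩ := h
        rcases ih β hβα with hacc | hatt
        · exact Or.inr ⟨β, hS.2 β hacc, hβα⟩
        · exact absurd hatt hβ
  refine ⟨hS.1.1, fun α hα => ?_⟩
  rcases key α with hacc | hatt
  · exact absurd (hS.2 α hacc) hα
  · exact hatt
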